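/- Let d ≥ 2, q ∈ ℝ, 0 < R0 < R1, and let χ be an admissible transition function for (R0, R1). Define α : ℝ^d \ {0} → ℝ by 2α(x) := 1 + (d−q−1) χ(r) + ((r² − x_d²)/r) χ′(r), where r := |x| and x_d := x·e_d. Then α is twice continuously differentiable on ℝ^d \ {0} and, for every x ≠ 0, 2 Δα(x) = χ′(r) [ ((d−1)(d−q) − 2)/r + ((d+1)/r)(x_d²/r²) ] + χ″(r) [ 2d − q − (d+1) x_d²/r² ] + χ‴(r) (r² − x_d²)/r. -/

import Mathlib

open scoped BigOperators

noncomputable section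

/-- `χ : ℝ → ℝ` is an *admissible transition function* for `(R0, R1)`. -/
structure IsAdmissibleTransition (R0 R1 : ℝ) (χ : ℝ → ℝ) : Prop where
  contDiffOn : ContDiffOn ℝ 3 χ (Set.Ici 0)
  eq_zero : ∀ r, 0 ≤ r → r ≤ R0 → χ r = 0
  eq_one : ∀ r, R1 ≤ r → χ r = 1
  mem_Ioo : ∀ r, R0 < r → r < R1 → χ r ∈ Set.Ioo (0 : ℝ) 1
  deriv_nonneg : ∀ r : ℝ, 0 < r → 0 ≤ r * deriv χ r
  deriv_lt_four : ∀ r : ℝ, 0 < r → r * deriv χ r < 4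

/-- Partial derivative of a real-valued function in the `i`-th coordinate direction. -/
def rpd (d : ℕ) (f : EuclideanSpace ℝ (Fin d) → ℝ) (i : Fin d)
    (x : EuclideanSpace ℝ (Fin d)) : ℝ :=
  fderiv ℝ f x (EuclideanSpace.single i 1)

/-- Laplacian (sum of second partial derivatives) of a real-valued function. -/
def rlap (d : ℕ) (f : EuclideanSpace ℝ (Fin d) → ℝ) (x : EuclideanSpace ℝ (Fin d)) : ℝ :=
  ∑ i, rpd d (rpd d f i) i x

/-- The multiplier coefficient `α`, defined by
`2α(x) = 1 + (d−q−1)χ(r) + ((r² − x_d²)/r)χ′(r)`, `r = |x|`. -/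
def alphaFun (d : ℕ) (ld : Fin d) (q : ℝ) (χ : ℝ → ℝ)
    (x : EuclideanSpace ℝ (Fin d)) : ℝ :=
  (1 + ((d : ℝ) - q - 1) * χ ‖x‖ + ((‖x‖ ^ 2 - (x ld) ^ 2) / ‖x‖) * deriv χ ‖x‖) / 2

/-! Away from the origin `α = A(r) + x_d² B(r)` with `A(r) = (1 + (d-q-1)χ + rχ′)/2` and
`B(r) = -χ′/(2r)`. Functions of the shape `u = a(r) + x_ℓ² b(r)` have first partials
`∂ᵢu = (a′/r + x_ℓ² b′/r) xᵢ + 2δᵢℓ x_ℓ b`, whose first factor has the same shape again; differentiating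
once more and summing over `i` gives `Δu = a″ + (d-1)a′/r + 2b + x_ℓ² (b″ + (d+3)b′/r)`. Substituting
`A` and `B` yields the formula. -/

open Filter Topology

section NormDeriv

variable {E : Type*} [NormedAddCommGroup E] [InnerProductSpace ℝ E] {x : E}

theorem hasFDerivAt_norm_of_ne_zero (hx : x ≠ 0) :
    HasFDerivAt (‖·‖) (‖x‖⁻¹ • innerSL ℝ x) x := by
  have h := (hasStrictFDerivAt_norm_sq x).hasFDerivAt.sqrt (by positivity)
  simp only [Real.sqrt_sq (norm_nonneg _)] at h
  convert h using 1
  have : ‖x‖ ≠ 0 := norm_ne_zero_iff.2 hx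
  ext v
  simp only [smul_apply, coe_innerSL_apply, smul_eq_mul, one_div, mul_inv_rev, nsmul_eq_mul,
    Nat.cast_ofNat]
  field_simp

theorem HasDerivAt.hasFDerivAt_comp_norm {φ : ℝ → ℝ} {φ' : ℝ} (hφ : HasDerivAt φ φ' ‖x‖)
    (hx : x ≠ 0) : HasFDerivAt (fun y => φ ‖y‖) ((φ' / ‖x‖) • innerSL ℝ x) x := by
  refine (hφ.comp_hasFDerivAt x (hasFDerivAt_norm_of_ne_zero hx)).congr_fderiv ?_
  rw [smul_smul, div_eq_mul_inv]

theorem ContDiffOn.comp_norm {n : WithTop ℕ∞} {φ : ℝ → ℝ} (hφ : ContDiffOn ℝ n φ (Set.Ioi 0)) :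
    ContDiffOn ℝ n (fun y : E => φ ‖y‖) {y | y ≠ 0} :=
  hφ.comp (contDiffOn_id.norm ℝ fun _ hy => hy) fun _ hy => norm_pos_iff.2 hy

end NormDeriv

section Euclidean

variable {d : ℕ} {f g : EuclideanSpace ℝ (Fin d) → ℝ} {x : EuclideanSpace ℝ (Fin d)}

theorem HasFDerivAt.rpd_eq {L : EuclideanSpace ℝ (Fin d) →L[ℝ] ℝ} (h : HasFDerivAt f L x)
    (i : Fin d) : rpd d f i x = L (EuclideanSpace.single i 1) := by
  rw [rpd, h.fderiv]

theorem Filter.EventuallyEq.rpd (h : f =ᶠ[𝓝 x] g) (i : Fin d) : rpd d f i =ᶠ[𝓝 x] rpd d g i :=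
  (h.fderiv (𝕜 := ℝ)).mono fun y hy => by simp only [_root_.rpd, hy]

theorem innerSL_single_one (i : Fin d) : innerSL ℝ x (EuclideanSpace.single i 1) = x i := by
  simp [EuclideanSpace.inner_single_right]

theorem proj_single_one (ℓ i : Fin d) :
    EuclideanSpace.proj ℓ (EuclideanSpace.single i (1 : ℝ)) = if ℓ = i then 1 else 0 := by
  simp

theorem hasFDerivAt_coord (i : Fin d) :
    HasFDerivAt (fun y : EuclideanSpace ℝ (Fin d) => y i)
      (EuclideanSpace.proj i : EuclideanSpace ℝ (Fin d) →L[ℝ] ℝ) x :=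
  (EuclideanSpace.proj (𝕜 := ℝ) i).hasFDerivAt

variable {a b : ℝ → ℝ}

theorem hasFDerivAt_radial_add_sq_coord_mul_radial (ℓ : Fin d) {a' b' : ℝ} (hx : x ≠ 0)
    (ha : HasDerivAt a a' ‖x‖) (hb : HasDerivAt b b' ‖x‖) :
    HasFDerivAt (fun y => a ‖y‖ + y ℓ ^ 2 * b ‖y‖)
      (((a' + x ℓ ^ 2 * b') / ‖x‖) • innerSL ℝ x + (2 * x ℓ * b ‖x‖) • EuclideanSpace.proj ℓ)
      x := by
  have h := (ha.hasFDerivAt_comp_norm hx).add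
    (((hasFDerivAt_coord ℓ).pow 2).mul (hb.hasFDerivAt_comp_norm hx))
  refine h.congr_fderiv ?_
  ext v
  simp only [Nat.add_one_sub_one, pow_one, nsmul_eq_mul, Nat.cast_ofNat, add_apply, smul_apply,
    coe_innerSL_apply, smul_eq_mul, PiLp.proj_apply]
  ring

theorem rpd_radial_add_sq_coord_mul_radial (ℓ i : Fin d) {a' b' : ℝ → ℝ} (hx : x ≠ 0)
    (ha : HasDerivAt a (a' ‖x‖) ‖x‖) (hb : HasDerivAt b (b' ‖x‖) ‖x‖) :
    rpd d (fun y => a ‖y‖ + y ℓ ^ 2 * b ‖y‖) i x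
      = (a' ‖x‖ / ‖x‖ + x ℓ ^ 2 * (b' ‖x‖ / ‖x‖)) * x i
        + 2 * x ℓ * b ‖x‖ * (if ℓ = i then 1 else 0) := by
  rw [(hasFDerivAt_radial_add_sq_coord_mul_radial ℓ hx ha hb).rpd_eq]
  simp only [add_apply, smul_apply, smul_eq_mul, innerSL_single_one, proj_single_one]
  ring

theorem rpd_rpd_radial_add_sq_coord_mul_radial (ℓ i : Fin d) {a' a'' b' b'' : ℝ → ℝ}
    (ha : ∀ s > 0, HasDerivAt a (a' s) s) (ha' : ∀ s > 0, HasDerivAt a' (a'' s) s)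
    (hb : ∀ s > 0, HasDerivAt b (b' s) s) (hb' : ∀ s > 0, HasDerivAt b' (b'' s) s)
    (hx : x ≠ 0) :
    rpd d (rpd d (fun y => a ‖y‖ + y ℓ ^ 2 * b ‖y‖) i) i x
      = a' ‖x‖ / ‖x‖ + x ℓ ^ 2 * (b' ‖x‖ / ‖x‖)
        + ((a'' ‖x‖ * ‖x‖ - a' ‖x‖) / ‖x‖ ^ 2 + x ℓ ^ 2 * ((b'' ‖x‖ * ‖x‖ - b' ‖x‖) / ‖x‖ ^ 2))
            / ‖x‖ * x i ^ 2
        + (4 * x ℓ ^ 2 * (b' ‖x‖ / ‖x‖) + 2 * b ‖x‖) * (if ℓ = i then 1 else 0) := by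
  have hr : 0 < ‖x‖ := norm_pos_iff.2 hx
  have hpartial : rpd d (fun y => a ‖y‖ + y ℓ ^ 2 * b ‖y‖) i =ᶠ[𝓝 x] fun y =>
      (a' ‖y‖ / ‖y‖ + y ℓ ^ 2 * (b' ‖y‖ / ‖y‖)) * y i
        + 2 * y ℓ * b ‖y‖ * (if ℓ = i then 1 else 0) :=
    eventually_ne_nhds hx |>.mono fun y hy =>
      have hy' : 0 < ‖y‖ := norm_pos_iff.2 hy
      rpd_radial_add_sq_coord_mul_radial ℓ i hy (ha _ hy') (hb _ hy')
  have hdiv : ∀ {f f' : ℝ → ℝ}, (∀ s > 0, HasDerivAt f (f' s) s) →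
      HasDerivAt (fun s => f s / s) ((f' ‖x‖ * ‖x‖ - f ‖x‖) / ‖x‖ ^ 2) ‖x‖ := fun hf =>
    ((hf _ hr).div (hasDerivAt_id' _) hr.ne').congr_deriv (by ring)
  have hderiv : HasFDerivAt (fun y => (a' ‖y‖ / ‖y‖ + y ℓ ^ 2 * (b' ‖y‖ / ‖y‖)) * y i
      + 2 * y ℓ * b ‖y‖ * (if ℓ = i then 1 else 0)) _ x :=
    ((hasFDerivAt_radial_add_sq_coord_mul_radial ℓ hx (hdiv ha') (hdiv hb')).mul
      (hasFDerivAt_coord i)).add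
    ((((hasFDerivAt_coord ℓ).const_mul 2).mul ((hb _ hr).hasFDerivAt_comp_norm hx)).mul_const
      (if ℓ = i then (1 : ℝ) else 0))
  rw [(hpartial.rpd i).eq_of_nhds, hderiv.rpd_eq]
  rcases eq_or_ne ℓ i with rfl | h
  · simp [innerSL_single_one]
    ring
  · simp [innerSL_single_one, h]
    ring

theorem rlap_radial_add_sq_coord_mul_radial (ℓ : Fin d) {a' a'' b' b'' : ℝ → ℝ}
    (ha : ∀ s > 0, HasDerivAt a (a' s) s) (ha' : ∀ s > 0, HasDerivAt a' (a'' s) s)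
    (hb : ∀ s > 0, HasDerivAt b (b' s) s) (hb' : ∀ s > 0, HasDerivAt b' (b'' s) s)
    (hx : x ≠ 0) :
    rlap d (fun y => a ‖y‖ + y ℓ ^ 2 * b ‖y‖) x
      = a'' ‖x‖ + (d - 1) / ‖x‖ * a' ‖x‖ + 2 * b ‖x‖
        + x ℓ ^ 2 * (b'' ‖x‖ + (d + 3) / ‖x‖ * b' ‖x‖) := by
  have hr : ‖x‖ ≠ 0 := norm_ne_zero_iff.2 hx
  simp only [rlap, rpd_rpd_radial_add_sq_coord_mul_radial ℓ _ ha ha' hb hb' hx,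
    Finset.sum_add_distrib, ← Finset.mul_sum, Finset.sum_const, Finset.card_univ,
    Fintype.card_fin, nsmul_eq_mul, Finset.sum_ite_eq, Finset.mem_univ, if_true]
  rw [← EuclideanSpace.real_norm_sq_eq]
  field_simp
  ring

end Euclidean

section Alpha

variable {d : ℕ} (ℓ : Fin d) (q : ℝ) {χ : ℝ → ℝ}

theorem contDiffOn_alphaFun {n : WithTop ℕ∞} (hχ : ContDiffOn ℝ (n + 1) χ (Set.Ioi 0)) :
    ContDiffOn ℝ n (alphaFun d ℓ q χ) {y | y ≠ 0} := by
  have hnorm : ContDiffOn ℝ n (‖·‖) {y : EuclideanSpace ℝ (Fin d) | y ≠ 0} :=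
    contDiffOn_id.norm ℝ fun _ hy => hy
  have hcoord : ContDiffOn ℝ n (fun y : EuclideanSpace ℝ (Fin d) => y ℓ) {y | y ≠ 0} :=
    (EuclideanSpace.proj (𝕜 := ℝ) ℓ).contDiff.contDiffOn
  exact ((contDiffOn_const.add (contDiffOn_const.mul (hχ.of_le le_self_add).comp_norm)).add
    ((((hnorm.pow 2).sub (hcoord.pow 2)).div hnorm fun _ hy => norm_ne_zero_iff.2 hy).mul
      (hχ.deriv_of_isOpen isOpen_Ioi le_rfl).comp_norm)).div_const 2

-- The identity also holds at `y = 0`, where both sides use the junk value `0 / 0 = 0`.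
theorem alphaFun_eq_radial_add_sq_coord_mul_radial :
    alphaFun d ℓ q χ = fun y => (1 + (d - q - 1) * χ ‖y‖ + ‖y‖ * deriv χ ‖y‖) / 2
      + y ℓ ^ 2 * (-deriv χ ‖y‖ / (2 * ‖y‖)) := by
  funext y
  rcases eq_or_ne y 0 with rfl | hy
  · simp [alphaFun]
  · have : ‖y‖ ≠ 0 := norm_ne_zero_iff.2 hy
    simp only [alphaFun]
    field_simp
    ring

theorem two_mul_rlap_alphaFun (h₀ : ∀ s > 0, HasDerivAt χ (deriv χ s) s)
    (h₁ : ∀ s > 0, HasDerivAt (deriv χ) (deriv (deriv χ) s) s)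
    (h₂ : ∀ s > 0, HasDerivAt (deriv (deriv χ)) (deriv (deriv (deriv χ)) s) s)
    {x : EuclideanSpace ℝ (Fin d)} (hx : x ≠ 0) :
    2 * rlap d (alphaFun d ℓ q χ) x
      = deriv χ ‖x‖ * ((((d : ℝ) - 1) * ((d : ℝ) - q) - 2) / ‖x‖
            + (((d : ℝ) + 1) / ‖x‖) * ((x ℓ) ^ 2 / ‖x‖ ^ 2))
        + deriv (deriv χ) ‖x‖ * (2 * (d : ℝ) - q - ((d : ℝ) + 1) * (x ℓ) ^ 2 / ‖x‖ ^ 2)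
        + deriv (deriv (deriv χ)) ‖x‖ * ((‖x‖ ^ 2 - (x ℓ) ^ 2) / ‖x‖) := by
  set χ₁ := deriv χ
  set χ₂ := deriv χ₁
  set χ₃ := deriv χ₂
  set c : ℝ := d - q - 1
  have ha (s : ℝ) (hs : 0 < s) : HasDerivAt (fun t => (1 + c * χ t + t * χ₁ t) / 2)
      (((c + 1) * χ₁ s + s * χ₂ s) / 2) s :=
    ((((h₀ s hs).const_mul c).const_add 1).add ((hasDerivAt_id' s).mul (h₁ s hs))).div_const 2
      |>.congr_deriv (by ring)
  have ha' (s : ℝ) (hs : 0 < s) : HasDerivAt (fun t => ((c + 1) * χ₁ t + t * χ₂ t) / 2)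
      (((c + 2) * χ₂ s + s * χ₃ s) / 2) s :=
    (((h₁ s hs).const_mul (c + 1)).add ((hasDerivAt_id' s).mul (h₂ s hs))).div_const 2
      |>.congr_deriv (by ring)
  have hb (s : ℝ) (hs : 0 < s) : HasDerivAt (fun t => -χ₁ t / (2 * t))
      ((χ₁ s - s * χ₂ s) / (2 * s ^ 2)) s :=
    ((h₁ s hs).neg.div ((hasDerivAt_id' s).const_mul 2) (by positivity)).congr_deriv (by
      simp only [Pi.neg_apply]
      field_simp
      ring)
  have hb' (s : ℝ) (hs : 0 < s) : HasDerivAt (fun t => (χ₁ t - t * χ₂ t) / (2 * t ^ 2))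
      ((2 * s * χ₂ s - 2 * χ₁ s - s ^ 2 * χ₃ s) / (2 * s ^ 3)) s :=
    (((h₁ s hs).sub ((hasDerivAt_id' s).mul (h₂ s hs))).div
      ((hasDerivAt_pow 2 s).const_mul 2) (by positivity)).congr_deriv (by
      simp only [Pi.sub_apply, Pi.mul_apply]
      field_simp
      ring)
  have hr : ‖x‖ ≠ 0 := norm_ne_zero_iff.2 hx
  rw [alphaFun_eq_radial_add_sq_coord_mul_radial,
    rlap_radial_add_sq_coord_mul_radial ℓ ha ha' hb hb' hx]
  field_simp
  ring

end Alpha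

/-- For `d ≥ 2`, `q ∈ ℝ` and an admissible transition function `χ` for `(R0, R1)`,
the function `α` with `2α(x) = 1 + (d−q−1)χ(r) + ((r² − x_d²)/r)χ′(r)` is twice
continuously differentiable on `ℝ^d \ {0}`, and for every `x ≠ 0`:
`2Δα(x) = χ′(r)[((d−1)(d−q) − 2)/r + ((d+1)/r)(x_d²/r²)]`
`+ χ″(r)[2d − q − (d+1)x_d²/r²] + χ‴(r)(r² − x_d²)/r`. -/
theorem alphaFun_laplacian (d : ℕ) (hd : 2 ≤ d) (q : ℝ) (R0 R1 : ℝ)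
    (χ : ℝ → ℝ) (hχ : IsAdmissibleTransition R0 R1 χ) :
    ContDiffOn ℝ 2 (alphaFun d ⟨d - 1, by omega⟩ q χ)
      {x : EuclideanSpace ℝ (Fin d) | x ≠ 0} ∧
    (∀ x : EuclideanSpace ℝ (Fin d), x ≠ 0 →
      2 * rlap d (alphaFun d ⟨d - 1, by omega⟩ q χ) x
        = deriv χ ‖x‖ * ((((d : ℝ) - 1) * ((d : ℝ) - q) - 2) / ‖x‖
              + (((d : ℝ) + 1) / ‖x‖) * ((x ⟨d - 1, by omega⟩) ^ 2 / ‖x‖ ^ 2))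
          + deriv (deriv χ) ‖x‖ * (2 * (d : ℝ) - q
              - ((d : ℝ) + 1) * (x ⟨d - 1, by omega⟩) ^ 2 / ‖x‖ ^ 2)
          + deriv (deriv (deriv χ)) ‖x‖ * ((‖x‖ ^ 2 - (x ⟨d - 1, by omega⟩) ^ 2) / ‖x‖)) := by
  have h₃ : ContDiffOn ℝ 3 χ (Set.Ioi 0) := hχ.contDiffOn.mono Set.Ioi_subset_Ici_self
  have h₂ : ContDiffOn ℝ 2 (deriv χ) (Set.Ioi 0) := h₃.deriv_of_isOpen isOpen_Ioi le_rfl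
  have h₁ : ContDiffOn ℝ 1 (deriv (deriv χ)) (Set.Ioi 0) := h₂.deriv_of_isOpen isOpen_Ioi le_rfl
  have hasDerivAt_deriv {f : ℝ → ℝ} {n : WithTop ℕ∞} (hf : ContDiffOn ℝ n f (Set.Ioi 0))
      (hn : n ≠ 0) (s : ℝ) (hs : 0 < s) : HasDerivAt f (deriv f s) s :=
    ((hf.differentiableOn hn).differentiableAt (Ioi_mem_nhds hs)).hasDerivAt
  exact ⟨contDiffOn_alphaFun _ q h₃, fun x hx => two_mul_rlap_alphaFun _ q
    (hasDerivAt_deriv h₃ (by norm_num)) (hasDerivAt_deriv h₂ (by norm_num))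
    (hasDerivAt_deriv h₁ (by norm_num)) hx⟩
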